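/- arXiv:1402.0775 — 2 statements merged into one kernel-verified Lean document; each statement's English description precedes it below -/
import Mathlib

section
/- Let X be a compact Hausdorff space with a free action of a finite group G by homeomorphisms. Then there exist finitely many continuous real-valued functions f₁, …, f_r on X such that Σᵢ fᵢ(x)² = 1 for all x ∈ X, and for every nontrivial g ∈ G, Σᵢ fᵢ(x)·fᵢ(g⁻¹·x) = 0 for all x ∈ X. -/
open scoped BigOperators

open Set

/-- For a free action of a finite group `G` on a compact Hausdorff space `X` there
is a finite family of continuous real functions `f₁, …, f_r` with `Σᵢ fᵢ(x)² = 1`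
and, for each nontrivial `g ∈ G`, `Σᵢ fᵢ(x)·fᵢ(g⁻¹·x) = 0`. -/
theorem exists_galois_partition_of_unity
    {G : Type*} [Group G] [Finite G] {X : Type*} [TopologicalSpace X]
    [CompactSpace X] [T2Space X] [MulAction G X]
    (hcont : ∀ g : G, Continuous (fun x : X => g • x))
    (hfree : ∀ (g : G) (x : X), g • x = x → g = 1) :
    ∃ (r : ℕ) (f : Fin r → C(X, ℝ)),
      (∀ x : X, ∑ i, (f i x) ^ 2 = 1) ∧
      (∀ g : G, g ≠ 1 → ∀ x : X, ∑ i, f i x * f i (g⁻¹ • x) = 0) := by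
  classical
  -- separation data
  have sep : ∀ (x : X) (g : G), ∃ u v : Set X, IsOpen u ∧ IsOpen v ∧ x ∈ u ∧ g • x ∈ v ∧
      (g ≠ 1 → Disjoint u v) := by
    intro x g
    by_cases hg : g = 1
    · exact ⟨univ, univ, isOpen_univ, isOpen_univ, mem_univ _, mem_univ _, fun h => absurd hg h⟩
    · have hne : x ≠ g • x := by
        intro h
        exact hg (hfree g x h.symm)
      obtain ⟨u, v, hu, hv, hxu, hxv, hd⟩ := t2_separation hne
      exact ⟨u, v, hu, hv, hxu, hxv, fun _ => hd⟩
  choose u v hu hv hxu hgxv hd using sep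
  set U : X → Set X := fun x => ⋂ g : G, (u x g ∩ (fun y => g • y) ⁻¹' v x g) with hU
  have hUopen : ∀ x, IsOpen (U x) := fun x =>
    isOpen_iInter_of_finite fun g => (hu x g).inter ((hv x g).preimage (hcont g))
  have hxU : ∀ x, x ∈ U x := fun x => mem_iInter.2 fun g => ⟨hxu x g, hgxv x g⟩
  have hkey : ∀ (x : X) (g : G), g ≠ 1 → ∀ y ∈ U x, g • y ∉ U x := by
    intro x g hg y hy hgy
    have h1 : g • y ∈ v x g := (mem_iInter.1 hy g).2
    have h2 : g • y ∈ u x g := (mem_iInter.1 hgy g).1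
    exact (hd x g hg).le_bot ⟨h2, h1⟩ |>.elim
  -- finite subcover
  obtain ⟨t, ht⟩ := isCompact_univ.elim_finite_subcover U hUopen
    (fun x _ => mem_iUnion.2 ⟨x, hxU x⟩)
  -- partition of unity indexed by t
  obtain ⟨p, hp⟩ := PartitionOfUnity.exists_isSubordinate (s := univ) (ι := {a // a ∈ t})
    isClosed_univ (fun i => U i) (fun i => hUopen i)
    (by
      intro x _
      rcases mem_iUnion₂.1 (ht (mem_univ x)) with ⟨a, hat, hax⟩
      exact mem_iUnion.2 ⟨⟨a, hat⟩, hax⟩)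
  set r := t.card
  have e : Fin r ≃ {a // a ∈ t} := (Fintype.equivFinOfCardEq (by simp [r])).symm
  refine ⟨r, fun i => ⟨fun x => Real.sqrt (p (e i) x),
    Real.continuous_sqrt.comp (p (e i)).continuous⟩, ?_, ?_⟩
  · intro x
    have h1 : ∑ᶠ j, p j x = 1 := p.sum_eq_one (mem_univ x)
    rw [finsum_eq_sum_of_fintype] at h1
    calc ∑ i : Fin r, Real.sqrt (p (e i) x) ^ 2
        = ∑ j : {a // a ∈ t}, Real.sqrt (p j x) ^ 2 := Fintype.sum_equiv e _ _ (fun i => rfl)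
      _ = ∑ j : {a // a ∈ t}, p j x := by
          refine Finset.sum_congr rfl fun j _ => ?_
          exact Real.sq_sqrt (p.nonneg j x)
      _ = 1 := h1
  · intro g hg x
    refine Finset.sum_eq_zero fun i _ => ?_
    by_cases h1 : p (e i) x = 0
    · simp [h1]
    by_cases h2 : p (e i) (g⁻¹ • x) = 0
    · simp [h2]
    exfalso
    have hx : x ∈ U (e i) := hp (e i) (subset_tsupport _ h1)
    have hy : g⁻¹ • x ∈ U (e i) := hp (e i) (subset_tsupport _ h2)
    have := hkey (e i) g hg (g⁻¹ • x) hy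
    rw [smul_inv_smul] at this
    exact this hx
end

section
/- Let X be a compact Hausdorff topological space with a free action of a finite group G by homeomorphisms such that the quotient X → X/G is a covering map. Then the map can : C(X) ⊗_{C(X/G)} C(X) → Map(G, C(X)) defined by can(a ⊗ b)(g) = a·(b ∘ g⁻¹) is surjective. -/
open scoped BigOperators

/-- Surjectivity of the Galois map
`can : C(X) ⊗_{C(X/G)} C(X) → Map(G, C(X))`, `can(a ⊗ b)(g) = a·(b ∘ g⁻¹)`,
for a free action of a finite group `G` on a compact Hausdorff space `X`, stated
pointwise: every function `φ : G → C(X)` is a finite sum of elementary images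
`g ↦ a·(g·b)`. -/
theorem galois_can_surjective
    {G : Type*} [Group G] [Finite G] {X : Type*} [TopologicalSpace X]
    [CompactSpace X] [T2Space X] [MulAction G X]
    (hcont : ∀ g : G, Continuous (fun x : X => g • x))
    (hfree : ∀ (g : G) (x : X), g • x = x → g = 1) :
    ∀ φ : G → C(X, ℂ), ∃ (r : ℕ) (a b : Fin r → C(X, ℂ)),
      ∀ (g : G) (x : X), φ g x = ∑ i, a i x * b i (g⁻¹ • x) := by
  classical
  have _inst : Fintype G := Fintype.ofFinite G
  intro φ
  -- Step 1: local slices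
  have hslice : ∀ x : X, ∃ U : Set X, IsOpen U ∧ x ∈ U ∧
      ∀ g : G, g ≠ 1 → ∀ y ∈ U, g⁻¹ • y ∉ U := by
    intro x
    have hV : ∀ g : G, ∃ V : Set X, IsOpen V ∧ x ∈ V ∧
        (g ≠ 1 → ∀ y ∈ V, g⁻¹ • y ∉ V) := by
      intro g
      by_cases hg : g = 1
      · exact ⟨Set.univ, isOpen_univ, trivial, fun h => absurd hg h⟩
      · have hne : g⁻¹ • x ≠ x := fun h => hg (inv_eq_one.mp (hfree g⁻¹ x h))
        obtain ⟨B, A, hB, hA, hxB, hxA, hAB⟩ := t2_separation hne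
        refine ⟨A ∩ (fun y => g⁻¹ • y) ⁻¹' B,
          hA.inter (hB.preimage (hcont g⁻¹)), ⟨hxA, hxB⟩,
          fun _ y hy hy' => ?_⟩
        exact Set.disjoint_left.mp hAB hy.2 hy'.1
    choose V hVopen hxV hVprop using hV
    refine ⟨⋂ g, V g, isOpen_iInter_of_finite hVopen, Set.mem_iInter.mpr hxV, ?_⟩
    intro g hg y hy hy'
    exact hVprop g hg y (Set.mem_iInter.mp hy g) (Set.mem_iInter.mp hy' g)
  choose U hUopen hxU hUprop using hslice
  -- Step 2: finite subcover
  obtain ⟨s, hs⟩ := CompactSpace.isCompact_univ.elim_finite_subcover U hUopen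
    (fun x _ => Set.mem_iUnion.mpr ⟨x, hxU x⟩)
  -- Step 3: partition of unity subordinate to the cover
  obtain ⟨f, hf⟩ := PartitionOfUnity.exists_isSubordinate (s := (Set.univ : Set X))
    isClosed_univ (fun i : s => U (i : X)) (fun i => hUopen _)
    (by
      intro x _
      have := hs (Set.mem_univ x)
      simp only [Set.mem_iUnion] at this ⊢
      obtain ⟨y, hy, hyU⟩ := this
      exact ⟨⟨y, hy⟩, hyU⟩)
  -- square roots (as complex-valued continuous functions)
  set q : s → C(X, ℂ) := fun i =>
    ⟨fun x => ((Real.sqrt (f i x) : ℝ) : ℂ),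
      Complex.continuous_ofReal.comp (Real.continuous_sqrt.comp (f i).continuous)⟩ with hq
  have key : ∀ (k : G) (x : X),
      ∑ i : s, q i x * q i (k⁻¹ • x) = if k = 1 then 1 else 0 := by
    intro k x
    by_cases hk : k = 1
    · subst hk
      simp only [inv_one, one_smul, if_true]
      have h1 : ∑ᶠ i, f i x = 1 := f.sum_eq_one (Set.mem_univ x)
      rw [finsum_eq_sum_of_fintype] at h1
      have hterm : ∀ i : s, q i x * q i x = ((f i x : ℝ) : ℂ) := by
        intro i
        simp only [hq, ContinuousMap.coe_mk, ← Complex.ofReal_mul,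
          Real.mul_self_sqrt (f.nonneg i x)]
      rw [Finset.sum_congr rfl fun i _ => hterm i, ← Complex.ofReal_sum, h1,
        Complex.ofReal_one]
    · rw [if_neg hk]
      apply Finset.sum_eq_zero
      intro i _
      by_cases hfx : f i x = 0
      · simp [hq, hfx]
      · have hmem : x ∈ U (i : X) := hf i (subset_tsupport _ hfx)
        have hz : f i (k⁻¹ • x) = 0 := by
          by_contra h
          exact hUprop (i : X) k hk x hmem (hf i (subset_tsupport _ h))
        simp [hq, hz]
  -- Step 4: assemble
  let A : s × G → C(X, ℂ) := fun p => φ p.2⁻¹ * q p.1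
  let B : s × G → C(X, ℂ) := fun p => (q p.1).comp ⟨fun y => p.2⁻¹ • y, hcont p.2⁻¹⟩
  refine ⟨Fintype.card (s × G), fun j => A ((Fintype.equivFin (s × G)).symm j),
    fun j => B ((Fintype.equivFin (s × G)).symm j), ?_⟩
  intro g x
  rw [Equiv.sum_comp ((Fintype.equivFin (s × G)).symm)
    (fun p => A p x * B p (g⁻¹ • x)), Fintype.sum_prod_type_right]
  have hinner : ∀ h : G, ∑ i : s, A (i, h) x * B (i, h) (g⁻¹ • x)
      = φ h⁻¹ x * (if g * h = 1 then 1 else 0) := by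
    intro h
    have hsmul : h⁻¹ • g⁻¹ • x = (g * h)⁻¹ • x := by
      rw [mul_inv_rev, mul_smul]
    calc ∑ i : s, A (i, h) x * B (i, h) (g⁻¹ • x)
        = φ h⁻¹ x * ∑ i : s, q i x * q i ((g * h)⁻¹ • x) := by
          rw [Finset.mul_sum]
          apply Finset.sum_congr rfl
          intro i _
          simp only [A, B, ContinuousMap.comp_apply, ContinuousMap.coe_mk,
            ContinuousMap.mul_apply, hsmul]
          ring
      _ = φ h⁻¹ x * (if g * h = 1 then 1 else 0) := by rw [key]
  rw [Finset.sum_congr rfl fun h _ => hinner h]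
  have hcond : ∀ h : G, (g * h = 1) ↔ (h = g⁻¹) := by
    intro h
    constructor
    · intro hh; exact eq_inv_of_mul_eq_one_right hh
    · intro hh; subst hh; simp
  simp only [hcond, mul_ite, mul_one, mul_zero]
  rw [Finset.sum_ite_eq' Finset.univ g⁻¹ (fun h => φ h⁻¹ x)]
  simp
end
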